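/- arXiv:1205.1868 — 4 statements merged into one kernel-verified Lean document; each statement's English description precedes it below -/
import Mathlib

section
/- Tail sum lemma. Let c be the constant from the spectral conditions on W and let φ∈Ψ. Then for every integer s with k₀−1 ≤ s ≤ m−1, ∑_{k=s+1}^m ‖P_L φ_k‖²/λ_k ≤ (c+2)·φ(s+1)/λ_{s+1}. -/
/-! Abel summation. With `p_k = ‖P_L φ_k‖²`, `S_n = ∑_{j ≤ n} p_j` and `A = φ(s+1)/(s+1)`, the
hypotheses on `φ` give `S_n ≤ φ(n) ≤ n A` for `n ≥ s + 1`. Since the weights `1/λ_k` decrease,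
summing by parts shows that `∑_{k > s} p_k / λ_k` is at most its value for the extremal
sequence `p_k ≡ A`, namely `A ((s+1)/λ_{s+1} + ∑_{k ≥ s+2} 1/λ_k)`. The tail-sum assumption
bounds the last sum by `c (s+1)/λ_{s+1}`, so the whole is at most `(c+1) φ(s+1)/λ_{s+1}`. -/

open scoped BigOperators

noncomputable section

def projNormSq {m : ℕ} (L : Submodule ℝ (EuclideanSpace ℝ (Fin m)))
    (x : EuclideanSpace ℝ (Fin m)) : ℝ :=
  ‖(L.orthogonalProjectionOnto x : EuclideanSpace ℝ (Fin m))‖ ^ 2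

open Finset

theorem sum_mul_add_le_of_partialSum_le (a w : ℕ → ℝ) (A : ℝ) {s m : ℕ}
    (ha : ∀ k, 0 ≤ a k)
    (hT : ∀ n ∈ Set.Icc (s + 1) m, ∑ j ∈ Icc 1 n, a j ≤ n * A)
    (hw : AntitoneOn w (Set.Icc (s + 1) m)) (hws : 0 ≤ w (s + 1)) :
    ∀ n ∈ Set.Icc (s + 1) m,
      ∑ k ∈ Icc (s + 1) n, a k * w k + (n * A - ∑ j ∈ Icc 1 n, a j) * w n ≤
        A * ((s + 1 : ℕ) * w (s + 1) + ∑ k ∈ Icc (s + 2) n, w k) := by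
  rintro n ⟨hsn, hnm⟩
  induction n, hsn using Nat.le_induction with
  | base =>
    have hprev : 0 ≤ ∑ j ∈ Icc 1 s, a j := sum_nonneg fun j _ => ha j
    rw [sum_Icc_succ_top (by omega : 1 ≤ s + 1), Icc_self, sum_singleton,
      Icc_eq_empty (by omega : ¬s + 2 ≤ s + 1), sum_empty]
    nlinarith
  | succ n hsn ih =>
    -- one summation-by-parts step loses exactly this nonnegative amount
    have hgap : 0 ≤ (n * A - ∑ j ∈ Icc 1 n, a j) * (w n - w (n + 1)) :=
      mul_nonneg (sub_nonneg.2 (hT n ⟨hsn, by omega⟩))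
        (sub_nonneg.2 (hw ⟨hsn, by omega⟩ ⟨by omega, hnm⟩ (by omega)))
    have := ih (by omega)
    rw [sum_Icc_succ_top (by omega : s + 1 ≤ n + 1), sum_Icc_succ_top (by omega : 1 ≤ n + 1),
      sum_Icc_succ_top (by omega : s + 2 ≤ n + 1)]
    push_cast at this ⊢
    linarith

theorem sum_mul_le_of_partialSum_le (a w : ℕ → ℝ) (A : ℝ) {s m : ℕ} (hsm : s + 1 ≤ m)
    (ha : ∀ k, 0 ≤ a k)
    (hT : ∀ n ∈ Set.Icc (s + 1) m, ∑ j ∈ Icc 1 n, a j ≤ n * A)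
    (hw : AntitoneOn w (Set.Icc (s + 1) m)) (hwm : 0 ≤ w m) :
    ∑ k ∈ Icc (s + 1) m, a k * w k ≤
      A * ((s + 1 : ℕ) * w (s + 1) + ∑ k ∈ Icc (s + 2) m, w k) := by
  have hm : m ∈ Set.Icc (s + 1) m := ⟨hsm, le_rfl⟩
  have hws : 0 ≤ w (s + 1) := hwm.trans (hw ⟨le_rfl, hsm⟩ hm hsm)
  have := sum_mul_add_le_of_partialSum_le a w A ha hT hw hws m hm
  nlinarith [mul_nonneg (sub_nonneg.2 (hT m hm)) hwm]

theorem tail_sum_lemma_general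
    (m : ℕ) (c : ℝ)
    (lam : ℕ → ℝ) (k0 : ℕ)
    (hlam_mono : ∀ k, 1 ≤ k → k < m → lam k ≤ lam (k + 1))
    (hk0_mem : 1 ≤ k0 ∧ k0 ≤ m) (hk0_pos : 0 < lam k0)
    (hsum : ∀ s, k0 ≤ s → s ≤ m → ∑ k ∈ Finset.Icc s m, (lam k)⁻¹ ≤ c * s / lam s)
    (phi : ℕ → EuclideanSpace ℝ (Fin m))
    (L : Submodule ℝ (EuclideanSpace ℝ (Fin m)))
    (f : ℕ → ℝ)
    (hf_ratio : ∀ k, 1 ≤ k → k < m → f (k + 1) / ((k : ℝ) + 1) ≤ f k / k)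
    (hf_dom : ∀ k, k ≤ m → ∑ j ∈ Finset.Icc 1 k, projNormSq L (phi j) ≤ f k)
    (s : ℕ) (hs_lb : k0 ≤ s + 1) (hs_ub : s + 1 ≤ m) :
    ∑ k ∈ Finset.Icc (s + 1) m, projNormSq L (phi k) / lam k ≤
      (c + 2) * f (s + 1) / lam (s + 1) := by
  have hp : ∀ k, 0 ≤ projNormSq L (phi k) := fun k => by unfold projNormSq; positivity
  have hlam : MonotoneOn lam (Set.Icc 1 m) :=
    monotoneOn_of_le_add_one Set.ordConnected_Icc fun k _ hk hk1 =>
      hlam_mono k hk.1 (Nat.lt_of_succ_le hk1.2)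
  have hlam_pos : ∀ k ∈ Set.Icc k0 m, 0 < lam k := fun k hk =>
    hk0_pos.trans_le (hlam hk0_mem ⟨hk0_mem.1.trans hk.1, hk.2⟩ hk.1)
  have hw : AntitoneOn (fun k => (lam k)⁻¹) (Set.Icc (s + 1) m) := by
    rintro a ⟨ha, ham⟩ b ⟨hb, hbm⟩ hab
    exact inv_anti₀ (hlam_pos a ⟨by omega, ham⟩) (hlam ⟨by omega, ham⟩ ⟨by omega, hbm⟩ hab)
  have hf : AntitoneOn (fun k : ℕ => f k / k) (Set.Icc 1 m) :=
    antitoneOn_of_add_one_le Set.ordConnected_Icc fun k _ hk hk1 => by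
      simpa only [Nat.cast_add, Nat.cast_one] using hf_ratio k hk.1 (Nat.lt_of_succ_le hk1.2)
  set A := f (s + 1) / (s + 1 : ℕ)
  have hT : ∀ n ∈ Set.Icc (s + 1) m, ∑ j ∈ Icc 1 n, projNormSq L (phi j) ≤ n * A := by
    rintro n ⟨hsn, hnm⟩
    have hfn : f n / n ≤ A := hf ⟨by omega, hs_ub⟩ ⟨by omega, hnm⟩ hsn
    rw [div_le_iff₀ (by exact_mod_cast (by omega : 0 < n))] at hfn
    linarith [hf_dom n hnm]
  have htail : ∑ k ∈ Icc (s + 2) m, (lam k)⁻¹ ≤ c * (s + 1 : ℕ) / lam (s + 1) := by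
    refine le_trans (sum_le_sum_of_subset_of_nonneg (Icc_subset_Icc (by omega) le_rfl) ?_)
      (hsum (s + 1) hs_lb hs_ub)
    intro k hk _
    obtain ⟨hsk, hkm⟩ := mem_Icc.1 hk
    exact (inv_pos.2 (hlam_pos k ⟨by omega, hkm⟩)).le
  have hf_nonneg : 0 ≤ f (s + 1) := (sum_nonneg fun j _ => hp j).trans (hf_dom _ hs_ub)
  have hlam_s := hlam_pos (s + 1) ⟨hs_lb, hs_ub⟩
  calc ∑ k ∈ Icc (s + 1) m, projNormSq L (phi k) / lam k
      = ∑ k ∈ Icc (s + 1) m, projNormSq L (phi k) * (lam k)⁻¹ := by simp only [div_eq_mul_inv]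
    _ ≤ A * ((s + 1 : ℕ) * (lam (s + 1))⁻¹ + ∑ k ∈ Icc (s + 2) m, (lam k)⁻¹) :=
      sum_mul_le_of_partialSum_le _ _ A hs_ub hp hT hw
        (inv_pos.2 (hlam_pos m ⟨by omega, le_rfl⟩)).le
    _ ≤ A * ((s + 1 : ℕ) * (lam (s + 1))⁻¹ + c * (s + 1 : ℕ) / lam (s + 1)) := by gcongr
    _ = (c + 1) * f (s + 1) / lam (s + 1) := by simp only [A]; field_simp; ring
    _ ≤ (c + 2) * f (s + 1) / lam (s + 1) := by gcongr; linarith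

/-- **Tail sum lemma.** Under the spectral assumptions on `W` (eigenvalues
`0 ≤ λ₁ ≤ … ≤ λ_m`, orthonormal eigenvectors `φ₁,…,φ_m`), with `c` the constant from those
assumptions and `φ ∈ Ψ`, for every integer `s` with `k₀ − 1 ≤ s ≤ m − 1`,
`∑_{k=s+1}^m ‖P_L φ_k‖²/λ_k ≤ (c+2) φ(s+1)/λ_{s+1}`. -/
theorem tail_sum_lemma
    (m : ℕ) (hm : 2 ≤ m) (c : ℝ) (hc : 0 < c)
    (lam : ℕ → ℝ) (k0 : ℕ)
    (hlam_nonneg : ∀ k, 1 ≤ k → k ≤ m → 0 ≤ lam k)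
    (hlam_mono : ∀ k, 1 ≤ k → k < m → lam k ≤ lam (k + 1))
    (hk0_mem : 1 ≤ k0 ∧ k0 ≤ m) (hk0_pos : 0 < lam k0)
    (hk0_min : ∀ k, 1 ≤ k → k ≤ m → 0 < lam k → k0 ≤ k)
    (hratio : ∀ k, k0 ≤ k → k < m → ((k : ℝ) + 1) / lam (k + 1) ≤ (k : ℝ) / lam k)
    (hgap : ∀ k, k0 ≤ k → k < m → lam (k + 1) ≤ c * lam k)
    (hsum : ∀ s, k0 ≤ s → s ≤ m → ∑ k ∈ Finset.Icc s m, (lam k)⁻¹ ≤ c * s / lam s)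
    (phi : ℕ → EuclideanSpace ℝ (Fin m))
    (horth : Orthonormal ℝ (fun k : Fin m => phi ((k : ℕ) + 1)))
    (L : Submodule ℝ (EuclideanSpace ℝ (Fin m)))
    (f : ℕ → ℝ)
    (hf_mono : ∀ k, k < m → f k ≤ f (k + 1))
    (hf_ratio : ∀ k, 1 ≤ k → k < m → f (k + 1) / ((k : ℝ) + 1) ≤ f k / k)
    (hf_dom : ∀ k, k ≤ m → ∑ j ∈ Finset.Icc 1 k, projNormSq L (phi j) ≤ f k)
    (s : ℕ) (hs_lb : k0 ≤ s + 1) (hs_ub : s + 1 ≤ m) :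
    ∑ k ∈ Finset.Icc (s + 1) m, projNormSq L (phi k) / lam k ≤
      (c + 2) * f (s + 1) / lam (s + 1) :=
  tail_sum_lemma_general m c lam k0 hlam_mono hk0_mem hk0_pos hsum phi L f hf_ratio hf_dom s hs_lb
    hs_ub

end
end

section
/- The coherence function φ̄ belongs to Ψ and is its smallest element: φ̄ is nondecreasing on {0,1,…,m}, k↦φ̄(k)/k is nonincreasing on {1,…,m}, ∑_{j=1}^k ‖P_L φ_j‖² ≤ φ̄(k) for all k=0,…,m, and for every φ∈Ψ one has φ̄(k) ≤ φ(k) for all k=0,…,m. -/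
open scoped BigOperators

noncomputable section

/-- the coherence function `φ̄(k) = max_{1≤t≤k} t · max_{t≤j≤m} (1/j) ∑_{i=1}^j g(i)`
(with `φ̄(0) = 0`, realized as the supremum of an empty set) -/
def cohFn (m : ℕ) (g : ℕ → ℝ) (k : ℕ) : ℝ :=
  sSup ((fun t : ℕ => (t : ℝ) *
    sSup ((fun j : ℕ => (∑ i ∈ Finset.Icc 1 j, g i) / j) '' Set.Icc t m)) '' Set.Icc 1 k)

/-!
Write `a j = (∑_{i ≤ j} g i) / j` for the running averages and `B t = max_{t ≤ j ≤ m} a j`, so that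
`φ̄ k = max_{1 ≤ t ≤ k} t · B t`. Then `φ̄` is a maximum over a growing range, hence nondecreasing;
`B` is nonincreasing, so the one new term of `φ̄ (k + 1)` satisfies
`(k + 1) B (k + 1) ≤ (k + 1) / k · k B k`, which makes `φ̄ k / k` nonincreasing; and
`∑_{i ≤ k} g i = k a k ≤ k B k ≤ φ̄ k`. Conversely, if `φ ∈ Ψ` and `1 ≤ t ≤ k`, `t ≤ j ≤ m`, then
`a j ≤ φ j / j ≤ φ t / t ≤ φ k / t`, so `t B t ≤ φ k` and `φ̄ k ≤ φ k`.
-/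

section SSupIcc

variable {f : ℕ → ℝ} {a b j : ℕ}

lemma le_sSup_image_Icc (h₁ : a ≤ j) (h₂ : j ≤ b) : f j ≤ sSup (f '' Set.Icc a b) :=
  le_csSup ((Set.finite_Icc a b).image f).bddAbove ⟨j, ⟨h₁, h₂⟩, rfl⟩

lemma sSup_image_Icc_le {c : ℝ} (hab : a ≤ b) (h : ∀ j, a ≤ j → j ≤ b → f j ≤ c) :
    sSup (f '' Set.Icc a b) ≤ c :=
  csSup_le ((Set.nonempty_Icc.2 hab).image f) (Set.forall_mem_image.2 fun j hj => h j hj.1 hj.2)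

end SSupIcc

def tailMaxAvg (m : ℕ) (g : ℕ → ℝ) (t : ℕ) : ℝ :=
  sSup ((fun j : ℕ => (∑ i ∈ Finset.Icc 1 j, g i) / j) '' Set.Icc t m)

section CohFn

variable {m : ℕ} {g : ℕ → ℝ} {k t : ℕ}

lemma avg_le_tailMaxAvg {j : ℕ} (h₁ : t ≤ j) (h₂ : j ≤ m) :
    (∑ i ∈ Finset.Icc 1 j, g i) / j ≤ tailMaxAvg m g t :=
  le_sSup_image_Icc (f := fun j : ℕ => (∑ i ∈ Finset.Icc 1 j, g i) / j) h₁ h₂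

lemma tailMaxAvg_nonneg (hg : 0 ≤ g) (t : ℕ) : 0 ≤ tailMaxAvg m g t :=
  Real.sSup_nonneg <| Set.forall_mem_image.2 fun j _ =>
    div_nonneg (Finset.sum_nonneg fun i _ => hg i) j.cast_nonneg

lemma antitone_tailMaxAvg (hg : 0 ≤ g) : Antitone (tailMaxAvg m g) := by
  intro s t hst
  by_cases htm : t ≤ m
  · exact sSup_image_Icc_le htm fun j h₁ h₂ => avg_le_tailMaxAvg (hst.trans h₁) h₂
  · -- past `m` the supremum is taken over `∅`, hence is `0`
    have hempty : Set.Icc t m = ∅ := Set.Icc_eq_empty htm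
    simp only [tailMaxAvg, hempty, Set.image_empty, Real.sSup_empty]
    exact tailMaxAvg_nonneg hg s

lemma mul_tailMaxAvg_le_cohFn (h₁ : 1 ≤ t) (h₂ : t ≤ k) : t * tailMaxAvg m g t ≤ cohFn m g k :=
  le_sSup_image_Icc (f := fun t : ℕ => (t : ℝ) * tailMaxAvg m g t) h₁ h₂

lemma cohFn_le_of_forall {c : ℝ} (hk : 1 ≤ k)
    (h : ∀ t, 1 ≤ t → t ≤ k → t * tailMaxAvg m g t ≤ c) : cohFn m g k ≤ c :=
  sSup_image_Icc_le hk h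

lemma cohFn_zero : cohFn m g 0 = 0 := by
  simp [cohFn]

lemma cohFn_nonneg (hg : 0 ≤ g) (k : ℕ) : 0 ≤ cohFn m g k :=
  Real.sSup_nonneg <| Set.forall_mem_image.2 fun t _ =>
    mul_nonneg t.cast_nonneg (tailMaxAvg_nonneg hg t)

lemma monotone_cohFn (hg : 0 ≤ g) : Monotone (cohFn m g) := by
  intro k l hkl
  rcases Nat.eq_zero_or_pos k with rfl | hk
  · exact cohFn_zero.trans_le (cohFn_nonneg hg l)
  · exact cohFn_le_of_forall hk fun t h₁ h₂ => mul_tailMaxAvg_le_cohFn h₁ (h₂.trans hkl)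

lemma cohFn_succ_div_le (hg : 0 ≤ g) (hk : 1 ≤ k) :
    cohFn m g (k + 1) / ((k : ℝ) + 1) ≤ cohFn m g k / k := by
  have hk₀ : (0 : ℝ) < k := by exact_mod_cast hk
  rw [div_le_div_iff₀ (by positivity) hk₀, ← le_div_iff₀ hk₀, mul_div_assoc]
  refine cohFn_le_of_forall (by omega) fun t h₁ h₂ => ?_
  have hφk := cohFn_nonneg (m := m) hg k
  rcases Nat.lt_or_ge t (k + 1) with ht | ht
  · calc (t : ℝ) * tailMaxAvg m g t ≤ cohFn m g k := mul_tailMaxAvg_le_cohFn h₁ (by omega)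
      _ ≤ cohFn m g k * ((k + 1) / k) :=
        le_mul_of_one_le_right hφk ((one_le_div hk₀).2 (by linarith))
  · obtain rfl : t = k + 1 := le_antisymm h₂ ht
    have hB := antitone_tailMaxAvg (m := m) hg (Nat.le_succ k)
    have hkB : (k : ℝ) * tailMaxAvg m g k ≤ cohFn m g k := mul_tailMaxAvg_le_cohFn hk le_rfl
    calc ((k + 1 : ℕ) : ℝ) * tailMaxAvg m g (k + 1) ≤ (k + 1) * tailMaxAvg m g k := by
          push_cast; gcongr
      _ = k * tailMaxAvg m g k * ((k + 1) / k) := by field_simp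
      _ ≤ cohFn m g k * ((k + 1) / k) := by gcongr

lemma sum_Icc_le_cohFn (hk : k ≤ m) : ∑ i ∈ Finset.Icc 1 k, g i ≤ cohFn m g k := by
  rcases Nat.eq_zero_or_pos k with rfl | hk₁
  · simp [cohFn_zero]
  · calc ∑ i ∈ Finset.Icc 1 k, g i = k * ((∑ i ∈ Finset.Icc 1 k, g i) / k) := by
          field_simp
      _ ≤ k * tailMaxAvg m g k := by gcongr; exact avg_le_tailMaxAvg le_rfl hk
      _ ≤ cohFn m g k := mul_tailMaxAvg_le_cohFn hk₁ le_rfl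

lemma cohFn_le_of_monotoneOn_of_antitoneOn {f : ℕ → ℝ} (hf : MonotoneOn f (Set.Iic m))
    (hf_div : AntitoneOn (fun k => f k / k) (Set.Icc 1 m))
    (hsum : ∀ k ≤ m, ∑ i ∈ Finset.Icc 1 k, g i ≤ f k) (hk : k ≤ m) : cohFn m g k ≤ f k := by
  rcases Nat.eq_zero_or_pos k with rfl | hk₁
  · simpa [cohFn_zero] using hsum 0 hk
  refine cohFn_le_of_forall hk₁ fun t h₁ h₂ => ?_
  have ht₀ : (0 : ℝ) < t := by exact_mod_cast h₁
  rw [mul_comm, ← le_div_iff₀ ht₀]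
  refine sSup_image_Icc_le (h₂.trans hk) fun j htj hjm => ?_
  calc (∑ i ∈ Finset.Icc 1 j, g i) / j ≤ f j / j := by gcongr; exact hsum j hjm
    _ ≤ f t / t := hf_div ⟨h₁, h₂.trans hk⟩ ⟨h₁.trans htj, hjm⟩ htj
    _ ≤ f k / t := by gcongr; exact hf (Set.mem_Iic.2 (h₂.trans hk)) (Set.mem_Iic.2 hk) h₂

end CohFn

theorem cohFn_mem_Psi_and_minimal_general
    (m : ℕ)
    (phi : ℕ → EuclideanSpace ℝ (Fin m))
    (L : Submodule ℝ (EuclideanSpace ℝ (Fin m))) :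
    (∀ k l, k ≤ l → l ≤ m →
        cohFn m (fun j => projNormSq L (phi j)) k ≤ cohFn m (fun j => projNormSq L (phi j)) l) ∧
    (∀ k, 1 ≤ k → k < m →
        cohFn m (fun j => projNormSq L (phi j)) (k + 1) / ((k : ℝ) + 1) ≤
          cohFn m (fun j => projNormSq L (phi j)) k / k) ∧
    (∀ k, k ≤ m →
        ∑ j ∈ Finset.Icc 1 k, projNormSq L (phi j) ≤
          cohFn m (fun j => projNormSq L (phi j)) k) ∧
    (∀ f : ℕ → ℝ,
        (∀ k, k < m → f k ≤ f (k + 1)) →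
        (∀ k, 1 ≤ k → k < m → f (k + 1) / ((k : ℝ) + 1) ≤ f k / k) →
        (∀ k, k ≤ m → ∑ j ∈ Finset.Icc 1 k, projNormSq L (phi j) ≤ f k) →
        ∀ k, k ≤ m → cohFn m (fun j => projNormSq L (phi j)) k ≤ f k) := by
  have hg : 0 ≤ fun j => projNormSq L (phi j) := fun j => sq_nonneg _
  refine ⟨fun k l hkl _ => monotone_cohFn hg hkl, fun k hk _ => cohFn_succ_div_le hg hk,
    fun k hk => sum_Icc_le_cohFn hk, fun f hf hf_div hsum k hk => ?_⟩
  refine cohFn_le_of_monotoneOn_of_antitoneOn ?_ ?_ hsum hk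
  · refine monotoneOn_of_le_succ Set.ordConnected_Iic fun a _ _ ha => ?_
    rw [Order.succ_eq_add_one] at ha ⊢
    exact hf a (Set.mem_Iic.1 ha)
  · refine antitoneOn_of_succ_le Set.ordConnected_Icc fun a _ ha ha' => ?_
    rw [Order.succ_eq_add_one] at ha' ⊢
    push_cast
    exact hf_div a ha.1 ha'.2

/-- **The coherence function `φ̄` belongs to `Ψ` and is its smallest element**: `φ̄` is
nondecreasing on `{0,…,m}`, `k ↦ φ̄(k)/k` is nonincreasing on `{1,…,m}`,
`∑_{j=1}^k ‖P_L φ_j‖² ≤ φ̄(k)` for all `k ≤ m`, and `φ̄ ≤ φ` on `{0,…,m}` for every `φ ∈ Ψ`. -/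
theorem cohFn_mem_Psi_and_minimal
    (m : ℕ) (hm : 2 ≤ m)
    (phi : ℕ → EuclideanSpace ℝ (Fin m))
    (horth : Orthonormal ℝ (fun k : Fin m => phi ((k : ℕ) + 1)))
    (L : Submodule ℝ (EuclideanSpace ℝ (Fin m))) :
    (∀ k l, k ≤ l → l ≤ m →
        cohFn m (fun j => projNormSq L (phi j)) k ≤ cohFn m (fun j => projNormSq L (phi j)) l) ∧
    (∀ k, 1 ≤ k → k < m →
        cohFn m (fun j => projNormSq L (phi j)) (k + 1) / ((k : ℝ) + 1) ≤
          cohFn m (fun j => projNormSq L (phi j)) k / k) ∧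
    (∀ k, k ≤ m →
        ∑ j ∈ Finset.Icc 1 k, projNormSq L (phi j) ≤
          cohFn m (fun j => projNormSq L (phi j)) k) ∧
    (∀ f : ℕ → ℝ,
        (∀ k, k < m → f k ≤ f (k + 1)) →
        (∀ k, 1 ≤ k → k < m → f (k + 1) / ((k : ℝ) + 1) ≤ f k / k) →
        (∀ k, k ≤ m → ∑ j ∈ Finset.Icc 1 k, projNormSq L (phi j) ≤ f k) →
        ∀ k, k ≤ m → cohFn m (fun j => projNormSq L (phi j)) k ≤ f k) :=
  cohFn_mem_Psi_and_minimal_general m phi L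

end
end

section
/- Variance and boundedness of the sampling matrix. Let (X,X',Y) be a random triple with X,X' independent uniform on V and Y∈{−1,1}, and set Z := Y·E_{X,X'} − E(Y·E_{X,X'}). Then ‖Z‖ ≤ 2 almost surely and ‖E Z²‖ ≤ 1/m, where ‖·‖ is the operator norm. -/
open MeasureTheory ProbabilityTheory Matrix

noncomputable section

/-- uniform distribution on `Fin m` -/
def uniformFin (m : ℕ) : Measure (Fin m) := ((m : ENNReal))⁻¹ • Measure.count

/-- operator (spectral) norm of a matrix -/
def opNorm {m : ℕ} (A : Matrix (Fin m) (Fin m) ℝ) : ℝ := ‖Matrix.toEuclideanCLM (𝕜 := ℝ) A‖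

/-- the symmetrized elementary matrix `E_{u,v} = ½(e_u ⊗ e_v + e_v ⊗ e_u)` -/
def Ematrix {m : ℕ} (u v : Fin m) : Matrix (Fin m) (Fin m) ℝ :=
  (1 / 2 : ℝ) • (Matrix.single u v 1 + Matrix.single v u 1)

/-! Everything is read off quadratic forms: for a symmetric matrix `A`, a bound
`|xᵀ A x| ≤ c ‖x‖²` for all `x` bounds the operator norm by `c` (Rayleigh quotient).
Since `xᵀ E_{u,v} x = x_u x_v`, each `Y • E_{X,X'}` and, by Jensen, its mean `M` have norm at
most `1`, whence `‖Z‖ ≤ 2`. For the variance, `xᵀ 𝔼[Z²] x = ∑_a Var((Y • E_{X,X'} x)_a)`, which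
is at most `𝔼 ‖E_{X,X'} x‖²`; averaging `‖E_{u,v} x‖² = (x_u² + x_v²)/4 + [u = v] x_u²/2` over
the uniform pair gives `(m + 1)/(2m²) ‖x‖² ≤ ‖x‖²/m`. -/

theorem norm_toEuclideanCLM_le_of_abs_dotProduct_mulVec_le {n : Type*} [Fintype n] [DecidableEq n]
    {A : Matrix n n ℝ} (hA : A.IsHermitian) {c : ℝ} (hc : 0 ≤ c)
    (h : ∀ x : n → ℝ, |x ⬝ᵥ A *ᵥ x| ≤ c * (x ⬝ᵥ x)) :
    ‖toEuclideanCLM (𝕜 := ℝ) A‖ ≤ c := by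
  rw [ContinuousLinearMap.norm_eq_iSup_rayleighQuotient _ (isSymmetric_toEuclideanLin_iff.2 hA)]
  refine ciSup_le fun x => ?_
  rw [ContinuousLinearMap.rayleighQuotient, ContinuousLinearMap.reApplyInnerSelf_apply,
    real_inner_comm, inner_toEuclideanCLM, ← real_inner_self_eq_norm_sq, abs_div,
    abs_of_nonneg real_inner_self_nonneg]
  refine div_le_of_le_mul₀ real_inner_self_nonneg hc ?_
  rw [EuclideanSpace.inner_eq_star_dotProduct, star_trivial]
  exact h x.ofLp

theorem Matrix.IsHermitian.dotProduct_mul_self_mulVec {n : Type*} [Fintype n] {A : Matrix n n ℝ}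
    (hA : A.IsHermitian) (x : n → ℝ) :
    x ⬝ᵥ (A * A) *ᵥ x = (A *ᵥ x) ⬝ᵥ (A *ᵥ x) := by
  rw [← mulVec_mulVec, dotProduct_mulVec, ← mulVec_transpose,
    ← conjTranspose_eq_transpose_of_trivial, hA.eq]

section Ematrix

variable {m : ℕ} (u v : Fin m) (x : Fin m → ℝ)

theorem Ematrix_isHermitian : (Ematrix u v).IsHermitian := by
  simp [Ematrix, IsHermitian, add_comm]

theorem Ematrix_mulVec :
    Ematrix u v *ᵥ x = (2⁻¹ : ℝ) • (Pi.single u (x v) + Pi.single v (x u)) := by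
  ext a
  simp only [Ematrix, add_mulVec, smul_mulVec, single_mulVec, one_mul, Pi.smul_apply, Pi.add_apply,
    Pi.single_apply, Function.update_apply, Pi.zero_apply, smul_eq_mul]
  ring

theorem dotProduct_Ematrix_mulVec : x ⬝ᵥ Ematrix u v *ᵥ x = x u * x v := by
  simp only [Ematrix_mulVec, dotProduct_smul, dotProduct_add, dotProduct_single, smul_eq_mul]
  ring

theorem abs_dotProduct_Ematrix_mulVec_le : |x ⬝ᵥ Ematrix u v *ᵥ x| ≤ x ⬝ᵥ x := by
  have hsq w : x w ^ 2 ≤ x ⬝ᵥ x := by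
    simpa [dotProduct, sq] using
      Finset.single_le_sum (fun a _ => mul_self_nonneg (x a)) (Finset.mem_univ w)
  rw [dotProduct_Ematrix_mulVec, abs_mul]
  nlinarith [hsq u, hsq v, sq_abs (x u), sq_abs (x v), sq_nonneg (|x u| - |x v|)]

theorem abs_dotProduct_smul_Ematrix_mulVec_le (y : ℝ) :
    |x ⬝ᵥ (y • Ematrix u v) *ᵥ x| ≤ |y| * (x ⬝ᵥ x) := by
  rw [smul_mulVec, dotProduct_smul, smul_eq_mul, abs_mul]
  exact mul_le_mul_of_nonneg_left (abs_dotProduct_Ematrix_mulVec_le u v x) (abs_nonneg y)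

theorem abs_Ematrix_apply_le_one (a b : Fin m) : |Ematrix u v a b| ≤ 1 := by
  simp only [Ematrix, Matrix.smul_apply, Matrix.add_apply, single_apply, smul_eq_mul]
  split_ifs <;> norm_num

theorem Ematrix_mulVec_dotProduct_self :
    (Ematrix u v *ᵥ x) ⬝ᵥ (Ematrix u v *ᵥ x) =
      (x u ^ 2 + x v ^ 2) / 4 + if u = v then x u ^ 2 / 2 else 0 := by
  simp only [Ematrix_mulVec, smul_add, dotProduct_add, dotProduct_smul, dotProduct_single,
    Pi.add_apply, Pi.smul_apply, Pi.single_eq_same, smul_eq_mul]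
  by_cases h : u = v
  · subst h
    simp only [Pi.single_eq_same, if_true]
    ring
  · simp only [Pi.single_eq_of_ne h, Pi.single_eq_of_ne (Ne.symm h), h, if_false]
    ring

theorem sum_sum_Ematrix_mulVec_dotProduct_self :
    ∑ u, ∑ v, (Ematrix u v *ᵥ x) ⬝ᵥ (Ematrix u v *ᵥ x) = (m + 1) / 2 * (x ⬝ᵥ x) := by
  simp_rw [Ematrix_mulVec_dotProduct_self]
  simp only [Finset.sum_add_distrib, Finset.sum_ite_eq, Finset.mem_univ, if_true, ← Finset.sum_div,
    Finset.sum_const, Finset.card_univ, Fintype.card_fin, nsmul_eq_mul, dotProduct, ← sq,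
    ← Finset.mul_sum]
  ring

end Ematrix

theorem integral_uniformFin {m : ℕ} (g : Fin m → ℝ) :
    ∫ u, g u ∂uniformFin m = (m : ℝ)⁻¹ * ∑ u, g u := by
  simp [uniformFin, integral_smul_measure, integral_fintype, Finset.mul_sum]

theorem integral_comp_of_indepFun_uniformFin {Ω : Type*} [MeasurableSpace Ω] {μ : Measure Ω}
    [IsProbabilityMeasure μ] {m : ℕ} {X X' : Ω → Fin m} (hX : Measurable X) (hX' : Measurable X')
    (hindep : IndepFun X X' μ) (hXunif : μ.map X = uniformFin m)
    (hX'unif : μ.map X' = uniformFin m) (f : Fin m → Fin m → ℝ) :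
    ∫ ω, f (X ω) (X' ω) ∂μ = (m : ℝ)⁻¹ ^ 2 * ∑ u, ∑ v, f u v := by
  have : IsProbabilityMeasure (uniformFin m) :=
    hXunif ▸ Measure.isProbabilityMeasure_map hX.aemeasurable
  have hlaw : μ.map (fun ω => (X ω, X' ω)) = (uniformFin m).prod (uniformFin m) := by
    rw [(indepFun_iff_map_prod_eq_prod_map_map hX.aemeasurable hX'.aemeasurable).1 hindep, hXunif,
      hX'unif]
  rw [← integral_map (f := fun q : Fin m × Fin m => f q.1 q.2) (hX.prodMk hX').aemeasurable
    (measurable_of_countable _).aestronglyMeasurable, hlaw, integral_prod _ Integrable.of_finite]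
  simp [integral_uniformFin, Finset.mul_sum, sq, mul_assoc]

theorem integral_sub_integral_sq_le {Ω : Type*} [MeasurableSpace Ω] {μ : Measure Ω}
    [IsProbabilityMeasure μ] {f : Ω → ℝ}
    (hf : AEStronglyMeasurable f μ) :
    ∫ ω, (f ω - ∫ ω', f ω' ∂μ) ^ 2 ∂μ ≤ ∫ ω, f ω ^ 2 ∂μ := by
  rw [← variance_eq_integral hf.aemeasurable]
  exact variance_le_expectation_sq hf

section MatrixIntegral

variable {Ω n : Type*} [MeasurableSpace Ω] {μ : Measure Ω} {W : Ω → Matrix n n ℝ}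

def matrixIntegral (μ : Measure Ω) (W : Ω → Matrix n n ℝ) : Matrix n n ℝ :=
  Matrix.of fun a b => ∫ ω, W ω a b ∂μ

theorem isHermitian_matrixIntegral (hW : ∀ ω, (W ω).IsHermitian) :
    (matrixIntegral μ W).IsHermitian :=
  IsHermitian.ext fun a b => by
    simp only [matrixIntegral, of_apply, star_trivial]
    exact integral_congr_ae (ae_of_all _ fun ω => (hW ω).apply a b)

variable [Fintype n]

theorem integrable_mulVec_apply (hW : ∀ a b, Integrable (fun ω => W ω a b) μ) (x : n → ℝ)
    (a : n) : Integrable (fun ω => (W ω *ᵥ x) a) μ :=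
  integrable_finsetSum _ fun b _ => (hW a b).mul_const (x b)

theorem memLp_mulVec_apply {p : ENNReal} (hW : ∀ a b, MemLp (fun ω => W ω a b) p μ)
    (x : n → ℝ) (a : n) : MemLp (fun ω => (W ω *ᵥ x) a) p μ :=
  memLp_finsetSum _ fun b _ => (hW a b).mul_const (x b)

theorem matrixIntegral_mulVec (hW : ∀ a b, Integrable (fun ω => W ω a b) μ) (x : n → ℝ) :
    matrixIntegral μ W *ᵥ x = fun a => ∫ ω, (W ω *ᵥ x) a ∂μ := by
  ext a
  simp only [mulVec, dotProduct, matrixIntegral, of_apply]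
  rw [integral_finsetSum _ fun b _ => (hW a b).mul_const (x b)]
  simp_rw [integral_mul_const]

theorem dotProduct_matrixIntegral_mulVec (hW : ∀ a b, Integrable (fun ω => W ω a b) μ)
    (x y : n → ℝ) : y ⬝ᵥ matrixIntegral μ W *ᵥ x = ∫ ω, y ⬝ᵥ W ω *ᵥ x ∂μ := by
  simp only [matrixIntegral_mulVec hW, dotProduct, ← integral_const_mul]
  exact (integral_finsetSum _ fun a _ => (integrable_mulVec_apply hW x a).const_mul (y a)).symm

variable [DecidableEq n]

theorem norm_toEuclideanCLM_matrixIntegral_le [IsProbabilityMeasure μ]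
    (hW : ∀ ω, (W ω).IsHermitian) (hint : ∀ a b, Integrable (fun ω => W ω a b) μ)
    {c : ℝ} (hc : 0 ≤ c) (h : ∀ᵐ ω ∂μ, ∀ x, |x ⬝ᵥ W ω *ᵥ x| ≤ c * (x ⬝ᵥ x)) :
    ‖toEuclideanCLM (𝕜 := ℝ) (matrixIntegral μ W)‖ ≤ c := by
  refine norm_toEuclideanCLM_le_of_abs_dotProduct_mulVec_le (isHermitian_matrixIntegral hW) hc
    fun x => ?_
  rw [dotProduct_matrixIntegral_mulVec hint]
  calc |∫ ω, x ⬝ᵥ W ω *ᵥ x ∂μ| ≤ ∫ ω, |x ⬝ᵥ W ω *ᵥ x| ∂μ := abs_integral_le_integral_abs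
    _ ≤ ∫ _, c * (x ⬝ᵥ x) ∂μ := integral_mono_of_nonneg (ae_of_all _ fun _ => abs_nonneg _)
        (integrable_const _) (h.mono fun ω hω => hω x)
    _ = c * (x ⬝ᵥ x) := by simp

theorem ae_norm_toEuclideanCLM_sub_matrixIntegral_le [IsProbabilityMeasure μ]
    (hW : ∀ ω, (W ω).IsHermitian) (hint : ∀ a b, Integrable (fun ω => W ω a b) μ)
    {c : ℝ} (hc : 0 ≤ c) (h : ∀ᵐ ω ∂μ, ∀ x, |x ⬝ᵥ W ω *ᵥ x| ≤ c * (x ⬝ᵥ x)) :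
    ∀ᵐ ω ∂μ, ‖toEuclideanCLM (𝕜 := ℝ) (W ω - matrixIntegral μ W)‖ ≤ 2 * c :=
  h.mono fun ω hω => by
    rw [map_sub, two_mul]
    exact (norm_sub_le _ _).trans <| add_le_add
      (norm_toEuclideanCLM_le_of_abs_dotProduct_mulVec_le (hW ω) hc hω)
      (norm_toEuclideanCLM_matrixIntegral_le hW hint hc h)

theorem norm_toEuclideanCLM_matrixIntegral_centered_sq_le [IsProbabilityMeasure μ]
    (hW : ∀ ω, (W ω).IsHermitian) (hL2 : ∀ a b, MemLp (fun ω => W ω a b) 2 μ)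
    {c : ℝ} (hc : 0 ≤ c) (h : ∀ x, ∫ ω, (W ω *ᵥ x) ⬝ᵥ (W ω *ᵥ x) ∂μ ≤ c * (x ⬝ᵥ x)) :
    ‖toEuclideanCLM (𝕜 := ℝ) (matrixIntegral μ fun ω =>
      (W ω - matrixIntegral μ W) * (W ω - matrixIntegral μ W))‖ ≤ c := by
  set M := matrixIntegral μ W
  have hint a b : Integrable (fun ω => W ω a b) μ := (hL2 a b).integrable one_le_two
  have hZ ω : (W ω - M).IsHermitian := (hW ω).sub (isHermitian_matrixIntegral hW)
  have hZL2 a b : MemLp (fun ω => (W ω - M) a b) 2 μ := (hL2 a b).sub (memLp_const (M a b))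
  have hZZ a b : Integrable (fun ω => ((W ω - M) * (W ω - M)) a b) μ :=
    integrable_finsetSum _ fun k _ => (hZL2 a k).integrable_mul (hZL2 k b)
  have hWx x a : MemLp (fun ω => (W ω *ᵥ x) a) 2 μ := memLp_mulVec_apply hL2 x a
  refine norm_toEuclideanCLM_le_of_abs_dotProduct_mulVec_le
    (isHermitian_matrixIntegral fun ω => by simpa only [sq] using (hZ ω).pow 2) hc fun x => ?_
  have hZx ω : x ⬝ᵥ ((W ω - M) * (W ω - M)) *ᵥ x =
      ∑ a, ((W ω *ᵥ x) a - ∫ ω', (W ω' *ᵥ x) a ∂μ) ^ 2 := by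
    rw [(hZ ω).dotProduct_mul_self_mulVec, sub_mulVec, matrixIntegral_mulVec hint]
    simp only [dotProduct, Pi.sub_apply, sq]
  simp_rw [dotProduct_matrixIntegral_mulVec hZZ, hZx]
  rw [integral_finsetSum _ fun a _ => ?_, abs_of_nonneg (Finset.sum_nonneg fun a _ =>
    integral_nonneg fun ω => sq_nonneg _)]
  calc ∑ a, ∫ ω, ((W ω *ᵥ x) a - ∫ ω', (W ω' *ᵥ x) a ∂μ) ^ 2 ∂μ
      ≤ ∑ a, ∫ ω, (W ω *ᵥ x) a ^ 2 ∂μ :=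
        Finset.sum_le_sum fun a _ => integral_sub_integral_sq_le (hWx x a).1
    _ = ∫ ω, (W ω *ᵥ x) ⬝ᵥ (W ω *ᵥ x) ∂μ := by
        rw [← integral_finsetSum _ fun a _ => (hWx x a).integrable_sq]
        simp only [dotProduct, sq]
    _ ≤ c * (x ⬝ᵥ x) := h x
  exact ((hWx x a).sub (memLp_const _)).integrable_sq

end MatrixIntegral

section Sampling

variable {Ω : Type*} [MeasurableSpace Ω] {μ : Measure Ω} {m : ℕ} {X X' : Ω → Fin m} {Y : Ω → ℝ}

theorem memLp_smul_Ematrix_apply [IsFiniteMeasure μ] (hX : Measurable X) (hX' : Measurable X')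
    (hY : Measurable Y) (hY1 : ∀ᵐ ω ∂μ, |Y ω| ≤ 1) (p : ENNReal) (a b : Fin m) :
    MemLp (fun ω => (Y ω • Ematrix (X ω) (X' ω)) a b) p μ := by
  refine MemLp.of_bound (hY.mul ((measurable_of_countable (fun q : Fin m × Fin m =>
    Ematrix q.1 q.2 a b)).comp (hX.prodMk hX'))).aestronglyMeasurable 1 ?_
  filter_upwards [hY1] with ω hω
  rw [Matrix.smul_apply, smul_eq_mul, Real.norm_eq_abs, abs_mul]
  exact mul_le_one₀ hω (abs_nonneg _) (abs_Ematrix_apply_le_one _ _ a b)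

theorem integral_smul_Ematrix_mulVec_dotProduct_self [IsProbabilityMeasure μ]
    (hX : Measurable X) (hX' : Measurable X') (hindep : IndepFun X X' μ)
    (hXunif : μ.map X = uniformFin m) (hX'unif : μ.map X' = uniformFin m)
    (hY1 : ∀ᵐ ω ∂μ, |Y ω| = 1) (x : Fin m → ℝ) :
    ∫ ω, ((Y ω • Ematrix (X ω) (X' ω)) *ᵥ x) ⬝ᵥ ((Y ω • Ematrix (X ω) (X' ω)) *ᵥ x) ∂μ =
      (m : ℝ)⁻¹ ^ 2 * ((m + 1) / 2) * (x ⬝ᵥ x) := by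
  calc ∫ ω, ((Y ω • Ematrix (X ω) (X' ω)) *ᵥ x) ⬝ᵥ ((Y ω • Ematrix (X ω) (X' ω)) *ᵥ x) ∂μ
      = ∫ ω, (Ematrix (X ω) (X' ω) *ᵥ x) ⬝ᵥ (Ematrix (X ω) (X' ω) *ᵥ x) ∂μ :=
        integral_congr_ae <| hY1.mono fun ω hω => by
          dsimp only
          rw [smul_mulVec, smul_dotProduct, dotProduct_smul, smul_smul, ← abs_mul_abs_self, hω,
            one_mul, one_smul]
    _ = (m : ℝ)⁻¹ ^ 2 * ∑ u, ∑ v, (Ematrix u v *ᵥ x) ⬝ᵥ (Ematrix u v *ᵥ x) :=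
        integral_comp_of_indepFun_uniformFin hX hX' hindep hXunif hX'unif
          fun u v => (Ematrix u v *ᵥ x) ⬝ᵥ (Ematrix u v *ᵥ x)
    _ = (m : ℝ)⁻¹ ^ 2 * ((m + 1) / 2) * (x ⬝ᵥ x) := by
        rw [sum_sum_Ematrix_mulVec_dotProduct_self, mul_assoc]

end Sampling

theorem inv_sq_mul_add_one_div_two_le (m : ℕ) : (m : ℝ)⁻¹ ^ 2 * ((m + 1) / 2) ≤ 1 / m := by
  rcases Nat.eq_zero_or_pos m with rfl | hm
  · simp
  · have : (1 : ℝ) ≤ m := by exact_mod_cast hm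
    field_simp
    linarith

theorem sampling_matrix_variance_bound_general
    {Ω : Type*} [MeasureSpace Ω] [IsProbabilityMeasure (ℙ : Measure Ω)]
    (m : ℕ)
    (X X' : Ω → Fin m) (Y : Ω → ℝ)
    (hXmeas : Measurable X) (hX'meas : Measurable X') (hYmeas : Measurable Y)
    (hindep : IndepFun X X' ℙ)
    (hXunif : Measure.map X ℙ = uniformFin m)
    (hX'unif : Measure.map X' ℙ = uniformFin m)
    (hY : ∀ᵐ ω ∂ℙ, Y ω = 1 ∨ Y ω = -1)
    (Z : Ω → Matrix (Fin m) (Fin m) ℝ)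
    (hZ : ∀ ω, Z ω = Y ω • Ematrix (X ω) (X' ω) -
        Matrix.of fun a b => ∫ ω', Y ω' * Ematrix (X ω') (X' ω') a b ∂ℙ) :
    (∀ᵐ ω ∂ℙ, opNorm (Z ω) ≤ 2) ∧
      opNorm (Matrix.of fun a b => ∫ ω, (Z ω * Z ω) a b ∂ℙ) ≤ 1 / m := by
  set W := fun ω => Y ω • Ematrix (X ω) (X' ω)
  have hZW : Z = fun ω => W ω - matrixIntegral ℙ W := funext hZ
  have hYabs : ∀ᵐ ω ∂ℙ, |Y ω| = 1 := hY.mono fun ω hω => by rcases hω with h | h <;> simp [h]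
  have hWsymm ω : (W ω).IsHermitian := (Ematrix_isHermitian _ _).smul (IsSelfAdjoint.all _)
  have hWquad : ∀ᵐ ω ∂ℙ, ∀ x, |x ⬝ᵥ W ω *ᵥ x| ≤ 1 * (x ⬝ᵥ x) := hYabs.mono fun ω hω x =>
    hω ▸ abs_dotProduct_smul_Ematrix_mulVec_le (X ω) (X' ω) x (Y ω)
  have hWL2 := memLp_smul_Ematrix_apply hXmeas hX'meas hYmeas (hYabs.mono fun _ h => h.le) 2
  subst hZW
  refine ⟨?_, ?_⟩
  · filter_upwards [ae_norm_toEuclideanCLM_sub_matrixIntegral_le hWsymm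
      (fun a b => (hWL2 a b).integrable one_le_two) zero_le_one hWquad] with ω hω
    simpa only [opNorm, mul_one] using hω
  · refine (norm_toEuclideanCLM_matrixIntegral_centered_sq_le hWsymm hWL2 (by positivity)
      fun x => ?_).trans (inv_sq_mul_add_one_div_two_le m)
    exact (integral_smul_Ematrix_mulVec_dotProduct_self hXmeas hX'meas hindep hXunif hX'unif
      hYabs x).le

/-- **Variance and boundedness of the sampling matrix.** If `X, X'` are independent uniform on
`V` (`card V = m ≥ 2`) and `Y ∈ {−1,1}`, then `Z := Y·E_{X,X'} − E(Y·E_{X,X'})` satisfies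
`‖Z‖ ≤ 2` a.s. and `‖E Z²‖ ≤ 1/m` in operator norm. -/
theorem sampling_matrix_variance_bound
    {Ω : Type*} [MeasureSpace Ω] [IsProbabilityMeasure (ℙ : Measure Ω)]
    (m : ℕ) (hm : 2 ≤ m)
    (X X' : Ω → Fin m) (Y : Ω → ℝ)
    (hXmeas : Measurable X) (hX'meas : Measurable X') (hYmeas : Measurable Y)
    (hindep : IndepFun X X' ℙ)
    (hXunif : Measure.map X ℙ = uniformFin m)
    (hX'unif : Measure.map X' ℙ = uniformFin m)
    (hY : ∀ᵐ ω ∂ℙ, Y ω = 1 ∨ Y ω = -1)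
    (Z : Ω → Matrix (Fin m) (Fin m) ℝ)
    (hZ : ∀ ω, Z ω = Y ω • Ematrix (X ω) (X' ω) -
        Matrix.of fun a b => ∫ ω', Y ω' * Ematrix (X ω') (X' ω') a b ∂ℙ) :
    (∀ᵐ ω ∂ℙ, opNorm (Z ω) ≤ 2) ∧
      opNorm (Matrix.of fun a b => ∫ ω, (Z ω * Z ω) a b ∂ℙ) ≤ 1 / m :=
  sampling_matrix_variance_bound_general m X X' Y hXmeas hX'meas hYmeas hindep hXunif hX'unif hY Z
    hZ

end
end

section
/- Truncated weighted sum with projections. Let φ∈Ψ and δ>0 with k(δ) ≤ m−1, where k(δ) is the largest k≤m with λ_k^{−1}≥δ² (convention λ_k^{−1}=+∞ when λ_k=0, and k(δ)=0 if λ₁^{−1}<δ²). Then ∑_{k=1}^m (λ_k^{−1}∧δ²)·‖P_L φ_k‖² ≤ (c+3)·δ²·φ(k(δ)+1). -/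
/-!
Split the sum at `K = k(δ)`. For `k ≤ K` every weight is `δ²`, and
`∑_{k ≤ K} ‖P_L φ_k‖² ≤ φ(K) ≤ φ(K+1)`. For `k > K` the weights `λ_k⁻¹ < δ²` decrease, while the
partial sums `∑_{j ≤ t} ‖P_L φ_j‖² ≤ φ(t)` are at most `t φ(K+1)/(K+1)` because `φ(t)/t` is
nonincreasing. Summation by parts then bounds the tail by
`φ(K+1)/(K+1) · (∑_{k>K} λ_k⁻¹ + K λ_{K+1}⁻¹) ≤ (c+1) φ(K+1) λ_{K+1}⁻¹ ≤ (c+1) δ² φ(K+1)`.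
-/

open scoped Classical BigOperators

noncomputable section

/-- `k(δ)`: the largest `k ≤ m` with `λ_k⁻¹ ≥ δ²` (with the convention `λ_k⁻¹ = +∞` when
`λ_k = 0`), and `k(δ) = 0` if there is no such `k`. -/
def kDelta (m : ℕ) (lam : ℕ → ℝ) (δ : ℝ) : ℕ :=
  Finset.sup ((Finset.Icc 1 m).filter (fun k => lam k = 0 ∨ δ ^ 2 ≤ (lam k)⁻¹)) id

/-- the truncated weight `λ_k⁻¹ ∧ δ²` (`= δ²` when `λ_k = 0`) -/
def wCoef (lam : ℕ → ℝ) (δ : ℝ) (k : ℕ) : ℝ :=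
  if lam k = 0 then δ ^ 2 else min (lam k)⁻¹ (δ ^ 2)

open Finset

theorem Nat.monotoneOn_Icc_of_le_add_one {α : Type*} [Preorder α] {f : ℕ → α} {a b : ℕ}
    (hf : ∀ k, a ≤ k → k < b → f k ≤ f (k + 1)) : MonotoneOn f (Set.Icc a b) :=
  monotoneOn_of_le_succ Set.ordConnected_Icc fun k _ hk hk1 => by
    simp only [Order.succ_eq_add_one, Set.mem_Icc] at hk hk1 ⊢
    exact hf k hk.1 (by omega)

theorem Nat.antitoneOn_Icc_of_add_one_le {α : Type*} [Preorder α] {f : ℕ → α} {a b : ℕ}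
    (hf : ∀ k, a ≤ k → k < b → f (k + 1) ≤ f k) : AntitoneOn f (Set.Icc a b) :=
  Nat.monotoneOn_Icc_of_le_add_one (α := αᵒᵈ) hf

theorem sum_Icc_mul_le_of_partialSum_le {a g : ℕ → ℝ} {s m : ℕ} {F : ℝ} (hs : 1 ≤ s)
    (hsm : s ≤ m) (ha : AntitoneOn a (Set.Icc s m)) (ha0 : 0 ≤ a m) (hg : ∀ k, 0 ≤ g k)
    (hG : ∀ t ∈ Set.Icc s m, ∑ j ∈ Icc 1 t, g j ≤ t * F) :
    ∑ k ∈ Icc s m, a k * g k ≤ F * (∑ k ∈ Icc s m, a k + (s - 1) * a s) := by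
  have ha_nonneg : ∀ k ∈ Set.Icc s m, 0 ≤ a k := fun k hk =>
    ha0.trans (ha hk ⟨hsm, le_rfl⟩ hk.2)
  -- Carrying the nonnegative slack `a t * (t * F - ∑_{j ≤ t} g j)` makes each induction step
  -- one step of summation by parts.
  have key : ∀ t, s ≤ t → t ≤ m →
      ∑ k ∈ Icc s t, a k * g k + a t * (t * F - ∑ j ∈ Icc 1 t, g j) ≤
        F * (∑ k ∈ Icc s t, a k + (s - 1) * a s) := by
    intro t hst
    induction t, hst using Nat.le_induction with
    | base =>
      intro _
      have hgs : g s ≤ ∑ j ∈ Icc 1 s, g j :=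
        single_le_sum (fun j _ => hg j) (mem_Icc.2 ⟨hs, le_rfl⟩)
      simp only [Icc_self, sum_singleton]
      nlinarith [mul_le_mul_of_nonneg_left hgs (ha_nonneg s ⟨le_rfl, hsm⟩)]
    | succ t hst ih =>
      intro ht
      have hslack : 0 ≤ (a t - a (t + 1)) * (t * F - ∑ j ∈ Icc 1 t, g j) :=
        mul_nonneg (sub_nonneg.2 (ha ⟨hst, by omega⟩ ⟨by omega, ht⟩ (by omega)))
          (sub_nonneg.2 (hG t ⟨hst, by omega⟩))
      rw [sum_Icc_succ_top (by omega), sum_Icc_succ_top (by omega),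
        sum_Icc_succ_top (by omega)]
      push_cast
      nlinarith [ih (by omega)]
  nlinarith [key m hsm le_rfl, mul_nonneg ha0 (sub_nonneg.2 (hG m ⟨hsm, le_rfl⟩))]

theorem sum_Icc_mul_le_of_sum_le {a g f : ℕ → ℝ} {s m : ℕ} {c : ℝ} (hs : 1 ≤ s)
    (hsm : s ≤ m) (ha : AntitoneOn a (Set.Icc s m)) (ha0 : 0 ≤ a m) (hg : ∀ k, 0 ≤ g k)
    (hf : AntitoneOn (fun k : ℕ => f k / k) (Set.Icc s m))
    (hG : ∀ t ∈ Set.Icc s m, ∑ j ∈ Icc 1 t, g j ≤ f t)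
    (hsum : ∑ k ∈ Icc s m, a k ≤ c * s * a s) :
    ∑ k ∈ Icc s m, a k * g k ≤ (c + 1) * f s * a s := by
  have hs0 : (0 : ℝ) < s := Nat.cast_pos.2 hs
  have hG' : ∀ t ∈ Set.Icc s m, ∑ j ∈ Icc 1 t, g j ≤ t * (f s / s) := fun t ht => by
    have h := hf ⟨le_rfl, hsm⟩ ht ht.1
    rw [div_le_iff₀ (hs0.trans_le (Nat.cast_le.2 ht.1))] at h
    linarith [hG t ht]
  have has : 0 ≤ a s := ha0.trans (ha ⟨le_rfl, hsm⟩ ⟨hsm, le_rfl⟩ hsm)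
  have hF : 0 ≤ f s / s :=
    div_nonneg ((sum_nonneg fun j _ => hg j).trans (hG s ⟨le_rfl, hsm⟩)) hs0.le
  calc ∑ k ∈ Icc s m, a k * g k ≤ f s / s * (∑ k ∈ Icc s m, a k + (s - 1) * a s) :=
        sum_Icc_mul_le_of_partialSum_le hs hsm ha ha0 hg hG'
    _ ≤ f s / s * (c * s * a s + s * a s) := by gcongr; linarith
    _ = (c + 1) * f s * a s := by field_simp

theorem sum_Icc_one_eq_add {M : Type*} [AddCommMonoid M] (f : ℕ → M) {n m : ℕ} (h : n ≤ m) :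
    ∑ k ∈ Icc 1 m, f k = ∑ k ∈ Icc 1 n, f k + ∑ k ∈ Icc (n + 1) m, f k := by
  simp only [Icc_add_one_left_eq_Ioc]
  exact (sum_Ioc_consecutive f n.zero_le h).symm

section kDelta

variable {m : ℕ} {lam : ℕ → ℝ} {δ : ℝ} {k : ℕ}

theorem kDelta_le : kDelta m lam δ ≤ m :=
  Finset.sup_le fun _ hj => (mem_Icc.1 (mem_filter.1 hj).1).2

theorem le_kDelta (hk : k ∈ Icc 1 m) (h : lam k = 0 ∨ δ ^ 2 ≤ (lam k)⁻¹) :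
    k ≤ kDelta m lam δ :=
  Finset.le_sup (f := id) (mem_filter.2 ⟨hk, h⟩)

theorem kDelta_spec (h : 1 ≤ kDelta m lam δ) :
    lam (kDelta m lam δ) = 0 ∨ δ ^ 2 ≤ (lam (kDelta m lam δ))⁻¹ := by
  have hne : ((Icc 1 m).filter fun k => lam k = 0 ∨ δ ^ 2 ≤ (lam k)⁻¹).Nonempty := by
    by_contra hS
    simp [kDelta, not_nonempty_iff_eq_empty.1 hS] at h
  obtain ⟨j, hj, hjK⟩ := exists_mem_eq_sup _ hne id
  rw [kDelta, hjK]
  exact (mem_filter.1 hj).2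

theorem ne_zero_and_inv_lt_of_kDelta_lt (hk : kDelta m lam δ < k) (hkm : k ≤ m) :
    lam k ≠ 0 ∧ (lam k)⁻¹ < δ ^ 2 := by
  by_contra h
  rw [not_and_or, not_not, not_lt] at h
  exact hk.not_ge (le_kDelta (mem_Icc.2 ⟨by omega, hkm⟩) h)

theorem wCoef_of_kDelta_lt (hk : kDelta m lam δ < k) (hkm : k ≤ m) :
    wCoef lam δ k = (lam k)⁻¹ := by
  obtain ⟨hne, hlt⟩ := ne_zero_and_inv_lt_of_kDelta_lt hk hkm
  rw [wCoef, if_neg hne, min_eq_left hlt.le]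

theorem wCoef_of_le_kDelta (hmono : MonotoneOn lam (Set.Icc 1 m))
    (hnonneg : ∀ k ∈ Set.Icc 1 m, 0 ≤ lam k) (hk : k ∈ Icc 1 (kDelta m lam δ)) :
    wCoef lam δ k = δ ^ 2 := by
  obtain ⟨hk1, hkK⟩ := mem_Icc.1 hk
  have hKm : kDelta m lam δ ≤ m := kDelta_le
  rcases (hnonneg k ⟨hk1, by omega⟩).eq_or_lt with h0 | hpos
  · simp [wCoef, ← h0]
  have hle : lam k ≤ lam (kDelta m lam δ) := hmono ⟨hk1, by omega⟩ ⟨by omega, hKm⟩ hkK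
  have hinv : δ ^ 2 ≤ (lam k)⁻¹ := by
    rcases kDelta_spec (by omega : 1 ≤ kDelta m lam δ) with h0 | hK
    · linarith
    · exact hK.trans (inv_anti₀ hpos hle)
  rw [wCoef, if_neg hpos.ne', min_eq_right hinv]

theorem sum_wCoef_mul_eq (hmono : MonotoneOn lam (Set.Icc 1 m))
    (hnonneg : ∀ k ∈ Set.Icc 1 m, 0 ≤ lam k) (g : ℕ → ℝ) :
    ∑ k ∈ Icc 1 m, wCoef lam δ k * g k =
      δ ^ 2 * ∑ k ∈ Icc 1 (kDelta m lam δ), g k +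
        ∑ k ∈ Icc (kDelta m lam δ + 1) m, (lam k)⁻¹ * g k := by
  rw [sum_Icc_one_eq_add _ kDelta_le, mul_sum]
  congr 1
  · exact sum_congr rfl fun k hk => by rw [wCoef_of_le_kDelta hmono hnonneg hk]
  · refine sum_congr rfl fun k hk => ?_
    rw [wCoef_of_kDelta_lt (mem_Icc.1 hk).1 (mem_Icc.1 hk).2]

end kDelta

theorem truncated_weighted_sum_with_projections_general
    (m : ℕ) (hm : 2 ≤ m) (c : ℝ) (hc : 0 < c)
    (lam : ℕ → ℝ) (k0 : ℕ)
    (hlam_nonneg : ∀ k, 1 ≤ k → k ≤ m → 0 ≤ lam k)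
    (hlam_mono : ∀ k, 1 ≤ k → k < m → lam k ≤ lam (k + 1))
    (hk0_min : ∀ k, 1 ≤ k → k ≤ m → 0 < lam k → k0 ≤ k)
    (hsum : ∀ s, k0 ≤ s → s ≤ m → ∑ k ∈ Finset.Icc s m, (lam k)⁻¹ ≤ c * s / lam s)
    (phi : ℕ → EuclideanSpace ℝ (Fin m))
    (L : Submodule ℝ (EuclideanSpace ℝ (Fin m)))
    (f : ℕ → ℝ)
    (hf_mono : ∀ k, k < m → f k ≤ f (k + 1))
    (hf_ratio : ∀ k, 1 ≤ k → k < m → f (k + 1) / ((k : ℝ) + 1) ≤ f k / k)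
    (hf_dom : ∀ k, k ≤ m → ∑ j ∈ Finset.Icc 1 k, projNormSq L (phi j) ≤ f k)
    (δ : ℝ) (hkδ : kDelta m lam δ ≤ m - 1) :
    ∑ k ∈ Finset.Icc 1 m, wCoef lam δ k * projNormSq L (phi k) ≤
      (c + 3) * δ ^ 2 * f (kDelta m lam δ + 1) := by
  set K := kDelta m lam δ
  have hKm : K + 1 ≤ m := by omega
  have hg : ∀ k, 0 ≤ projNormSq L (phi k) := fun _ => sq_nonneg _
  have hfK : 0 ≤ f (K + 1) := (sum_nonneg fun j _ => hg j).trans (hf_dom _ hKm)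
  have hlam_pos : ∀ k, K < k → k ≤ m → 0 < lam k := fun k hk hkm =>
    (hlam_nonneg k (by omega) hkm).lt_of_ne' (ne_zero_and_inv_lt_of_kDelta_lt hk hkm).1
  have hinvK : (lam (K + 1))⁻¹ ≤ δ ^ 2 :=
    (ne_zero_and_inv_lt_of_kDelta_lt K.lt_succ_self hKm).2.le
  have hk0 : k0 ≤ K + 1 := hk0_min (K + 1) (by omega) hKm (hlam_pos _ K.lt_succ_self hKm)
  have htail : ∑ k ∈ Icc (K + 1) m, (lam k)⁻¹ * projNormSq L (phi k) ≤
      (c + 1) * f (K + 1) * (lam (K + 1))⁻¹ :=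
    sum_Icc_mul_le_of_sum_le (a := fun k => (lam k)⁻¹) K.succ_pos hKm
      (Nat.antitoneOn_Icc_of_add_one_le fun k hk hkm =>
        inv_anti₀ (hlam_pos k hk (by omega)) (hlam_mono k (by omega) hkm))
      (inv_nonneg.2 (hlam_nonneg m (by omega) le_rfl)) hg
      (Nat.antitoneOn_Icc_of_add_one_le fun k hk hkm => by
        exact_mod_cast hf_ratio k (by omega) hkm)
      (fun t ht => hf_dom t ht.2) ((hsum (K + 1) hk0 hKm).trans_eq (div_eq_mul_inv _ _))
  rw [sum_wCoef_mul_eq (Nat.monotoneOn_Icc_of_le_add_one hlam_mono)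
    (fun k hk => hlam_nonneg k hk.1 hk.2)]
  calc δ ^ 2 * ∑ k ∈ Icc 1 K, projNormSq L (phi k) +
        ∑ k ∈ Icc (K + 1) m, (lam k)⁻¹ * projNormSq L (phi k)
      ≤ δ ^ 2 * f (K + 1) + (c + 1) * f (K + 1) * δ ^ 2 := by
        gcongr δ ^ 2 * ?_ + ?_
        · exact (hf_dom K (by omega)).trans (hf_mono K (by omega))
        · exact htail.trans (by gcongr)
    _ ≤ (c + 3) * δ ^ 2 * f (K + 1) := by nlinarith [mul_nonneg (sq_nonneg δ) hfK]

/-- **Truncated weighted sum with projections.** Let `φ ∈ Ψ` and `δ > 0` with `k(δ) ≤ m−1`.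
Then `∑_{k=1}^m (λ_k⁻¹ ∧ δ²) ‖P_L φ_k‖² ≤ (c+3) δ² φ(k(δ)+1)`. -/
theorem truncated_weighted_sum_with_projections
    (m : ℕ) (hm : 2 ≤ m) (c : ℝ) (hc : 0 < c)
    (lam : ℕ → ℝ) (k0 : ℕ)
    (hlam_nonneg : ∀ k, 1 ≤ k → k ≤ m → 0 ≤ lam k)
    (hlam_mono : ∀ k, 1 ≤ k → k < m → lam k ≤ lam (k + 1))
    (hk0_mem : 1 ≤ k0 ∧ k0 ≤ m) (hk0_pos : 0 < lam k0)
    (hk0_min : ∀ k, 1 ≤ k → k ≤ m → 0 < lam k → k0 ≤ k)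
    (hratio : ∀ k, k0 ≤ k → k < m → ((k : ℝ) + 1) / lam (k + 1) ≤ (k : ℝ) / lam k)
    (hgap : ∀ k, k0 ≤ k → k < m → lam (k + 1) ≤ c * lam k)
    (hsum : ∀ s, k0 ≤ s → s ≤ m → ∑ k ∈ Finset.Icc s m, (lam k)⁻¹ ≤ c * s / lam s)
    (phi : ℕ → EuclideanSpace ℝ (Fin m))
    (horth : Orthonormal ℝ (fun k : Fin m => phi ((k : ℕ) + 1)))
    (L : Submodule ℝ (EuclideanSpace ℝ (Fin m)))
    (f : ℕ → ℝ)
    (hf_mono : ∀ k, k < m → f k ≤ f (k + 1))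
    (hf_ratio : ∀ k, 1 ≤ k → k < m → f (k + 1) / ((k : ℝ) + 1) ≤ f k / k)
    (hf_dom : ∀ k, k ≤ m → ∑ j ∈ Finset.Icc 1 k, projNormSq L (phi j) ≤ f k)
    (δ : ℝ) (hδ : 0 < δ) (hkδ : kDelta m lam δ ≤ m - 1) :
    ∑ k ∈ Finset.Icc 1 m, wCoef lam δ k * projNormSq L (phi k) ≤
      (c + 3) * δ ^ 2 * f (kDelta m lam δ + 1) :=
  truncated_weighted_sum_with_projections_general m hm c hc lam k0 hlam_nonneg hlam_mono hk0_min
    hsum phi L f hf_mono hf_ratio hf_dom δ hkδ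

end
end
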